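/- In the A_n^{(1)} crystal B(lΛ̄_k), the extremal element b_a with g,r determined by a = (n+1-k)g + r + 1 (so b_a = f_{k-g+r}^{max}b_{a-1} with b_0 the tableau m_{i,i'} = i) is the tableau with m_{i,i'} = i for i < k-g, m_{k-g,i'} = k-g+r+1, and m_{i,i'} = i+n+1-k for i > k-g, for all columns i'. -/

import Mathlib

/- The type A_n crystal B(lΛ̄_k): rectangular semistandard tableaux with k rows
and l columns, entries in {1,…,n+1}.  A tableau is encoded as a function
m : ℕ → ℕ → ℕ, where `m i c` is the entry in row `i`, column `c`
(rows 1..k, columns 1..l; `m i c = 0` outside this range).  Column `c = 1` is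
the rightmost tensor factor under the embedding
B(lΛ̄_k) ↪ B(Λ̄_k)^{⊗l}, (m_{i,i'}) ↦ (m^{(l)}) ⊗ ⋯ ⊗ (m^{(1)}). -/

namespace ATab

/-- semistandardness: entries in 1..n+1, rows weakly increasing, columns
strictly increasing, and `0` outside the `k × l` rectangle. -/
def isTab (n k l : ℕ) (m : ℕ → ℕ → ℕ) : Prop :=
  (∀ i c, 1 ≤ i → i ≤ k → 1 ≤ c → c ≤ l → 1 ≤ m i c ∧ m i c ≤ n + 1) ∧
  (∀ i c, 1 ≤ i → i ≤ k → 1 ≤ c → c < l → m i c ≤ m i (c + 1)) ∧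
  (∀ i c, 1 ≤ i → i < k → 1 ≤ c → c ≤ l → m i c < m (i + 1) c) ∧
  (∀ i c, i = 0 ∨ k < i ∨ c = 0 ∨ l < c → m i c = 0)

/-- column `c` contains the entry `j` -/
def colHas (k : ℕ) (m : ℕ → ℕ → ℕ) (c j : ℕ) : Prop :=
  ∃ i ∈ Finset.Icc 1 k, m i c = j

/-- column `c` contributes a `+` to the `j`-signature
(contains `j` but not `j+1`) -/
def colPlus (k : ℕ) (m : ℕ → ℕ → ℕ) (c j : ℕ) : Prop :=
  colHas k m c j ∧ ¬ colHas k m c (j + 1)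

/-- column `c` contributes a `−` to the `j`-signature
(contains `j+1` but not `j`) -/
def colMinus (k : ℕ) (m : ℕ → ℕ → ℕ) (c j : ℕ) : Prop :=
  colHas k m c (j + 1) ∧ ¬ colHas k m c j

open Classical in
/-- Signature-rule scan for `f_j`.  The columns are processed from the
rightmost tensor factor (column 1) towards the leftmost (column `c`),
maintaining the number of unmatched `−`'s, the number of unbracketed `+`'s
(which is `φ_j`), and the column of the leftmost unbracketed `+` (on which
`f_j` acts). -/
noncomputable def scan (k j : ℕ) (m : ℕ → ℕ → ℕ) : ℕ → ℕ × ℕ × Option ℕ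
  | 0 => (0, 0, none)
  | c + 1 =>
    let s := scan k j m c
    if colMinus k m (c + 1) j then (s.1 + 1, s.2.1, s.2.2)
    else if colPlus k m (c + 1) j then
      (if s.1 = 0 then (0, s.2.1 + 1, some (c + 1)) else (s.1 - 1, s.2.1, s.2.2))
    else s

/-- `φ_j` of a tableau: the number of unbracketed `+`'s in the `j`-signature -/
noncomputable def phi (k l j : ℕ) (m : ℕ → ℕ → ℕ) : ℕ := (scan k j m l).2.1

/-- the column on which `f_j` acts (leftmost unbracketed `+`), if any -/
noncomputable def fcol (k l j : ℕ) (m : ℕ → ℕ → ℕ) : Option ℕ := (scan k j m l).2.2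

open Classical in
/-- the Kashiwara operator `f_j` (`1 ≤ j ≤ n`): change the entry `j` to `j+1`
in the column given by the signature rule, undefined (`none`) if there is no
unbracketed `+`. -/
noncomputable def f (k l j : ℕ) (m : ℕ → ℕ → ℕ) : Option (ℕ → ℕ → ℕ) :=
  (fcol k l j m).map (fun c => fun i c' =>
    if c' = c ∧ m i c' = j then j + 1 else m i c')

/-- `p`-fold application of `f_j` (undefined if some step is undefined) -/
noncomputable def fpow (k l j : ℕ) : ℕ → (ℕ → ℕ → ℕ) → Option (ℕ → ℕ → ℕ)
  | 0, m => some m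
  | p + 1, m => (f k l j m).bind (fpow k l j p)

/-- the ground-state tableau `m_{i,i'} = i` -/
def m0 (k l : ℕ) : ℕ → ℕ → ℕ := fun i c =>
  if 1 ≤ i ∧ i ≤ k ∧ 1 ≤ c ∧ c ≤ l then i else 0

/-- the operator index used at step `a`: `i^{(a)} = k - g + r` with
`g = ⌊(a-1)/(n+1-k)⌋` and `r = (a-1) - (n+1-k)g`. -/
def op (n k a : ℕ) : ℕ := k - (a - 1) / (n + 1 - k) + (a - 1) % (n + 1 - k)

end ATab

namespace ATab

/-- the extremal tableaux: `b_0 = (m_{i,i'} = i)`,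
`b_a = f_{k-g+r}^{max} b_{a-1} = f_{k-g+r}^{φ_{k-g+r}(b_{a-1})} b_{a-1}` -/
noncomputable def bseq (n k l : ℕ) : ℕ → Option (ℕ → ℕ → ℕ)
  | 0 => some (m0 k l)
  | a + 1 => (bseq n k l a).bind
      (fun t => fpow k l (op n k (a + 1)) (phi k l (op n k (a + 1)) t) t)

/-- the tableau with `m_{i,i'} = i` for `i < k-g`, `m_{k-g,i'} = k-g+r+1`, and
`m_{i,i'} = i + n + 1 - k` for `i > k-g` -/
def target (n k l g r : ℕ) : ℕ → ℕ → ℕ := fun i c =>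
  if 1 ≤ i ∧ i ≤ k ∧ 1 ≤ c ∧ c ≤ l then
    (if i < k - g then i else if i = k - g then k - g + r + 1 else i + n + 1 - k)
  else 0

end ATab

/-!
If row `i₀` of a tableau is constantly `j`, while `j` occurs nowhere else and `j + 1` nowhere
at all, every column contributes a `+` to the `j`-signature, so `φ_j = l`. Raising the row
column by column, starting from column `l`, keeps the signature of the form `+^q -^(l-q)`
(columns `1, …, l`), so `f_j` always acts on the next column and `f_j^{max}` raises the whole
row to `j + 1`. Every `b_{a-1}` has this shape for the operator index of step `a`: row `k - g`
climbs from `k - g` to `n + 1 - g`, after which row `k - g - 1` becomes the active one.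
-/

namespace ATab

theorem scan_eq_of_plus_minus {k j l q : ℕ} {m : ℕ → ℕ → ℕ}
    (hplus : ∀ c, 1 ≤ c → c ≤ q → colPlus k m c j)
    (hminus : ∀ c, q < c → c ≤ l → colMinus k m c j) :
    ∀ c ≤ l, scan k j m c = (c - q, min c q, if min c q = 0 then none else some (min c q)) := by
  intro c
  induction c with
  | zero => simp [scan]
  | succ c ih =>
    intro hcl
    rw [scan, ih (by omega)]
    by_cases hcq : c + 1 ≤ q
    · have hp := hplus (c + 1) (by omega) hcq
      have hm : ¬ colMinus k m (c + 1) j := fun h => h.2 hp.1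
      simp only [if_neg hm, if_pos hp, min_eq_left (by omega : c ≤ q),
        min_eq_left hcq, Nat.sub_eq_zero_of_le hcq, Nat.sub_eq_zero_of_le (by omega : c ≤ q)]
      simp
    · simp only [if_pos (hminus (c + 1) (by omega) hcl), min_eq_right (by omega : q ≤ c),
        min_eq_right (by omega : q ≤ c + 1), Prod.mk.injEq, and_true]
      omega

structure IsSoleRow (k l j i₀ : ℕ) (T : ℕ → ℕ → ℕ) : Prop where
  mem_Icc : i₀ ∈ Finset.Icc 1 k
  row_eq : ∀ c, 1 ≤ c → c ≤ l → T i₀ c = j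
  eq_row_of_eq : ∀ i c, T i c = j → 1 ≤ c ∧ c ≤ l ∧ i = i₀
  ne_succ : ∀ i c, T i c ≠ j + 1

def raiseAbove (j q : ℕ) (T : ℕ → ℕ → ℕ) : ℕ → ℕ → ℕ :=
  fun i c => if q < c ∧ T i c = j then j + 1 else T i c

section IsSoleRow

variable {k l j i₀ : ℕ} {T : ℕ → ℕ → ℕ}

theorem IsSoleRow.raiseAbove_of_le (h : IsSoleRow k l j i₀ T) {q : ℕ} (hq : l ≤ q) :
    raiseAbove j q T = T := by
  funext i c
  unfold raiseAbove
  split_ifs with hc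
  · exact absurd (h.eq_row_of_eq i c hc.2).2.1 (by omega)
  · rfl

theorem IsSoleRow.raiseAbove_zero (h : IsSoleRow k l j i₀ T) (i c : ℕ) :
    raiseAbove j 0 T i c = if T i c = j then j + 1 else T i c := by
  unfold raiseAbove
  split_ifs <;> first | rfl | (exfalso; have := h.eq_row_of_eq i c; omega)

theorem IsSoleRow.colPlus_raiseAbove (h : IsSoleRow k l j i₀ T) {q c : ℕ} (hc : 1 ≤ c)
    (hcq : c ≤ q) (hcl : c ≤ l) : colPlus k (raiseAbove j q T) c j := by
  refine ⟨⟨i₀, h.mem_Icc, ?_⟩, ?_⟩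
  · rw [raiseAbove, if_neg (by omega), h.row_eq c hc hcl]
  · rintro ⟨i, -, hi⟩
    unfold raiseAbove at hi
    split_ifs at hi with hqc
    · omega
    · exact h.ne_succ i c hi

theorem IsSoleRow.colMinus_raiseAbove (h : IsSoleRow k l j i₀ T) {q c : ℕ} (hqc : q < c)
    (hcl : c ≤ l) : colMinus k (raiseAbove j q T) c j := by
  refine ⟨⟨i₀, h.mem_Icc, ?_⟩, ?_⟩
  · simp only [raiseAbove, if_pos (⟨hqc, h.row_eq c (by omega) hcl⟩ : q < c ∧ T i₀ c = j)]
  · rintro ⟨i, -, hi⟩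
    unfold raiseAbove at hi
    split_ifs at hi with hqc'
    · omega
    · exact hqc' ⟨hqc, hi⟩

theorem IsSoleRow.scan_raiseAbove (h : IsSoleRow k l j i₀ T) {q : ℕ} (hql : q ≤ l) :
    scan k j (raiseAbove j q T) l = (l - q, q, if q = 0 then none else some q) := by
  rw [scan_eq_of_plus_minus (fun c hc hcq => h.colPlus_raiseAbove hc hcq (by omega))
    (fun c hqc hcl => h.colMinus_raiseAbove hqc hcl) l le_rfl, min_eq_right hql]

theorem IsSoleRow.f_raiseAbove_succ (h : IsSoleRow k l j i₀ T) {q : ℕ} (hql : q + 1 ≤ l) :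
    f k l j (raiseAbove j (q + 1) T) = some (raiseAbove j q T) := by
  rw [f, fcol, h.scan_raiseAbove hql]
  simp only [Nat.add_one_ne_zero, if_false, Option.map_some, Option.some.injEq]
  funext i c
  simp only [raiseAbove]
  split_ifs <;> omega

theorem IsSoleRow.fpow_raiseAbove (h : IsSoleRow k l j i₀ T) :
    ∀ q ≤ l, fpow k l j q (raiseAbove j q T) = some (raiseAbove j 0 T) := by
  intro q
  induction q with
  | zero => simp [fpow]
  | succ q ih =>
    intro hql
    rw [fpow, h.f_raiseAbove_succ hql, Option.bind_some]
    exact ih (by omega)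

theorem IsSoleRow.fpow_phi (h : IsSoleRow k l j i₀ T) {T' : ℕ → ℕ → ℕ}
    (hT' : ∀ i c, T' i c = if T i c = j then j + 1 else T i c) :
    fpow k l j (phi k l j T) T = some T' := by
  have hphi : phi k l j T = l := by
    rw [phi, ← h.raiseAbove_of_le le_rfl, h.scan_raiseAbove le_rfl]
  have hT : T' = raiseAbove j 0 T :=
    funext₂ fun i c => (hT' i c).trans (h.raiseAbove_zero i c).symm
  conv_lhs => rw [hphi, ← h.raiseAbove_of_le le_rfl]
  rw [h.fpow_raiseAbove l le_rfl, hT]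

end IsSoleRow

theorem op_eq {n k : ℕ} (g : ℕ) {r : ℕ} (hr : r < n + 1 - k) :
    op n k ((n + 1 - k) * g + r + 1) = k - g + r := by
  rw [op, Nat.add_sub_cancel, Nat.mul_add_div (by omega), Nat.mul_add_mod,
    Nat.div_eq_of_lt hr, Nat.mod_eq_of_lt hr, Nat.add_zero]

theorem bseq_succ_of_eq {n k l a : ℕ} {T : ℕ → ℕ → ℕ} (h : bseq n k l a = some T) :
    bseq n k l (a + 1) = fpow k l (op n k (a + 1)) (phi k l (op n k (a + 1)) T) T := by
  rw [bseq, h, Option.bind_some]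

theorem fpow_phi_m0 {k : ℕ} (n l : ℕ) (hk : 1 ≤ k) :
    fpow k l k (phi k l k (m0 k l)) (m0 k l) = some (target n k l 0 0) := by
  refine IsSoleRow.fpow_phi (i₀ := k) ⟨Finset.mem_Icc.mpr ⟨hk, le_rfl⟩, ?_, ?_, ?_⟩ ?_ <;>
    intros <;> simp only [m0, target] at * <;> split_ifs at * <;> omega

theorem fpow_phi_target_of_lt {n k : ℕ} (l : ℕ) {g r : ℕ} (hg : g < k) (hr : r + 1 < n + 1 - k) :
    fpow k l (k - g + (r + 1)) (phi k l (k - g + (r + 1)) (target n k l g r))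
      (target n k l g r) = some (target n k l g (r + 1)) := by
  refine IsSoleRow.fpow_phi (i₀ := k - g) ⟨Finset.mem_Icc.mpr ⟨by omega, by omega⟩, ?_, ?_, ?_⟩
    ?_ <;> intros <;> simp only [target] at * <;> split_ifs at * <;> omega

theorem fpow_phi_target_last {n k : ℕ} (l : ℕ) {g : ℕ} (hg : g + 1 < k) (hkn : k ≤ n) :
    fpow k l (k - (g + 1)) (phi k l (k - (g + 1)) (target n k l g (n - k)))
      (target n k l g (n - k)) = some (target n k l (g + 1) 0) := by
  refine IsSoleRow.fpow_phi (i₀ := k - (g + 1))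
    ⟨Finset.mem_Icc.mpr ⟨by omega, by omega⟩, ?_, ?_, ?_⟩ ?_ <;>
    intros <;> simp only [target] at * <;> split_ifs at * <;> omega

theorem bseq_eq_target (n k l : ℕ) :
    ∀ g r, g < k → r < n + 1 - k →
      bseq n k l ((n + 1 - k) * g + r + 1) = some (target n k l g r)
  | 0, 0, hg, hr => by
    have hop : op n k (0 + 1) = k := op_eq 0 hr
    rw [show (n + 1 - k) * 0 + 0 + 1 = 0 + 1 by simp, bseq_succ_of_eq (bseq.eq_1 n k l), hop]
    exact fpow_phi_m0 n l hg
  | g + 1, 0, hg, hr => by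
    have ih := bseq_eq_target n k l g (n - k) (by omega) (by omega)
    have hidx : (n + 1 - k) * (g + 1) + 0 + 1 = (n + 1 - k) * g + (n - k) + 1 + 1 := by
      rw [Nat.mul_succ]; omega
    rw [hidx, bseq_succ_of_eq ih, ← hidx, op_eq (g + 1) hr, Nat.add_zero]
    exact fpow_phi_target_last l hg (by omega)
  | g, r + 1, hg, hr => by
    have ih := bseq_eq_target n k l g r hg (by omega)
    have hop : op n k ((n + 1 - k) * g + r + 1 + 1) = k - g + (r + 1) := op_eq g hr
    rw [← Nat.add_assoc, bseq_succ_of_eq ih, hop]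
    exact fpow_phi_target_of_lt l hg hr

end ATab

theorem An1_extremal_tableaux_general (n k l : ℕ) (a : ℕ) (ha : 1 ≤ a) (ha' : a ≤ k * (n + 1 - k)) :
    ATab.bseq n k l a =
      some (ATab.target n k l ((a - 1) / (n + 1 - k)) ((a - 1) % (n + 1 - k))) := by
  have hd : 0 < n + 1 - k := Nat.pos_of_ne_zero fun h => by rw [h, mul_zero] at ha'; omega
  have hg : (a - 1) / (n + 1 - k) < k := (Nat.div_lt_iff_lt_mul hd).mpr (by omega)
  have h := ATab.bseq_eq_target n k l _ ((a - 1) % (n + 1 - k)) hg (Nat.mod_lt _ hd)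
  rwa [Nat.div_add_mod, Nat.sub_add_cancel ha] at h

/-- in the `A_n^{(1)}` crystal `B(lΛ̄_k)`, the extremal element
`b_a` (with `g = ⌊(a-1)/(n+1-k)⌋`, `r = (a-1) - (n+1-k)g`, so
`b_a = f_{k-g+r}^{max} b_{a-1}` and `b_0` the tableau `m_{i,i'} = i`) is the
tableau with `m_{i,i'} = i` for `i < k-g`, `m_{k-g,i'} = k-g+r+1`, and
`m_{i,i'} = i+n+1-k` for `i > k-g`, in every column `i'`. -/
theorem An1_extremal_tableaux (n k l : ℕ) (hn : 2 ≤ n) (hk : 1 ≤ k)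
    (hkn : k ≤ n) (hl : 1 ≤ l) (a : ℕ) (ha : 1 ≤ a) (ha' : a ≤ k * (n + 1 - k)) :
    ATab.bseq n k l a =
      some (ATab.target n k l ((a - 1) / (n + 1 - k)) ((a - 1) % (n + 1 - k))) :=
  An1_extremal_tableaux_general n k l a ha ha'
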